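/- For every integer n ≥ 1: limsup_{m→∞} h_{n,m}(1)/m ≤ 1/4, limsup_{m→∞} h_{n,m}(2)/m ≤ 1/6, limsup_{m→∞} h_{n,m}(3)/m ≤ 1/12, and limsup_{m→∞} h_{n,m}(4)/m ≤ 1/20. -/

import Mathlib

open Polynomial Filter

/-- The on-site energy polynomial `ε_n(α) = (−1)^n − Σ_{k=2}^{n+1} (−1)^{⌊n/k⌋} α^{k−1}` in `ℤ[α]`. -/
noncomputable def eps (n : ℕ) : Polynomial ℤ :=
  C ((-1 : ℤ) ^ n) - ∑ k ∈ Finset.Icc 2 (n + 1), C ((-1 : ℤ) ^ (n / k)) * X ^ (k - 1)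

/-- `Q_n(m) = ∏_{s=1}^m (ε_{n+s}(α) − ε_n(α))`. -/
noncomputable def Q (n m : ℕ) : Polynomial ℤ :=
  ∏ s ∈ Finset.Icc 1 m, (eps (n + s) - eps n)

/-- `lowdeg P`: the multiplicity of the root `α = 0`, i.e. the least `i` with nonzero
coefficient of `α^i`. -/
noncomputable def lowdeg (P : Polynomial ℤ) : ℕ := P.natTrailingDegree

/-- `h_{n,m}(i)`: the number of `s` with `1 ≤ s ≤ m` such that
`lowdeg (ε_{n+s} − ε_n) > i`. -/
noncomputable def hcount (n m i : ℕ) : ℕ :=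
  ((Finset.Icc 1 m).filter (fun s => i < lowdeg (eps (n + s) - eps n))).card

lemma eps_coeff_zero (N : ℕ) : (eps N).coeff 0 = (-1) ^ N := by
  simp only [eps, coeff_sub, finset_sum_coeff, coeff_C_mul, coeff_X_pow, coeff_C]
  have h : ∑ k ∈ Finset.Icc 2 (N + 1), ((-1:ℤ) ^ (N / k) * if 0 = k - 1 then 1 else 0) = 0 := by
    apply Finset.sum_eq_zero
    intro k hk
    simp only [Finset.mem_Icc] at hk
    rw [if_neg (by omega), mul_zero]
  rw [h, sub_zero, if_pos trivial]

lemma eps_coeff (N j : ℕ) (hj : 1 ≤ j) :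
    (eps N).coeff j = if j ≤ N then -((-1 : ℤ) ^ (N / (j + 1))) else 0 := by
  simp only [eps, coeff_sub, finset_sum_coeff, coeff_C_mul, coeff_X_pow, coeff_C,
    if_neg (by omega : ¬ j = 0), zero_sub]
  by_cases hN : j ≤ N
  · rw [if_pos hN, Finset.sum_eq_single (j + 1)]
    · simp
    · intro b hb hbne
      simp only [Finset.mem_Icc] at hb
      rw [if_neg (by omega), mul_zero]
    · intro hmem
      exact absurd (Finset.mem_Icc.mpr ⟨by omega, by omega⟩) hmem
  · rw [if_neg hN, Finset.sum_eq_zero, neg_zero]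
    intro b hb
    simp only [Finset.mem_Icc] at hb
    rw [if_neg (by omega), mul_zero]

lemma neg_one_pow_eq_iff (a b : ℕ) : ((-1 : ℤ) ^ a = (-1) ^ b) ↔ a % 2 = b % 2 := by
  have h : ∀ c : ℕ, ((-1 : ℤ)) ^ c = if c % 2 = 0 then 1 else -1 := by
    intro c
    rcases Nat.even_or_odd c with h | h
    · rw [h.neg_one_pow, if_pos (Nat.even_iff.mp h)]
    · rw [h.neg_one_pow, if_neg (by simp [Nat.odd_iff.mp h])]
  rw [h a, h b]
  split_ifs <;> simp_all

/-- The arithmetic condition equivalent (one direction needed) to `lowdeg > i`. -/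
def pcond (i n s : ℕ) : Prop :=
  s % 2 = 0 ∧ ∀ k ∈ Finset.Icc 2 (i + 1), (n + s) / k % 2 = n / k % 2

instance (i n : ℕ) : DecidablePred (pcond i n) := fun s =>
  decidable_of_iff (s % 2 = 0 ∧ ∀ k ∈ Finset.Icc 2 (i + 1), (n + s) / k % 2 = n / k % 2)
    Iff.rfl

lemma lowdeg_imp (i n s : ℕ) (hi : 1 ≤ i) (hin : i ≤ n)
    (h : i < lowdeg (eps (n + s) - eps n)) : pcond i n s := by
  have hc : ∀ j ≤ i, (eps (n + s) - eps n).coeff j = 0 := fun j hj =>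
    Polynomial.coeff_eq_zero_of_lt_natTrailingDegree (lt_of_le_of_lt hj h)
  constructor
  · have h0 := hc 0 (by omega)
    rw [coeff_sub, eps_coeff_zero, eps_coeff_zero, sub_eq_zero] at h0
    have := (neg_one_pow_eq_iff _ _).mp h0
    omega
  · intro k hk
    simp only [Finset.mem_Icc] at hk
    have h1 := hc (k - 1) (by omega)
    rw [coeff_sub, eps_coeff _ _ (by omega), eps_coeff _ _ (by omega),
      if_pos (by omega), if_pos (by omega), sub_eq_zero, neg_inj] at h1
    have hk1 : k - 1 + 1 = k := by omega
    rw [hk1] at h1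
    exact (neg_one_pow_eq_iff _ _).mp h1

lemma lowdeg_small (i n s : ℕ) (hn : n < i) (hs : 1 ≤ s) :
    ¬ (i < lowdeg (eps (n + s) - eps n)) := by
  intro h
  have h1 : (eps (n + s) - eps n).coeff (n + 1) = 0 :=
    Polynomial.coeff_eq_zero_of_lt_natTrailingDegree (lt_of_le_of_lt (by omega) h)
  rw [coeff_sub, eps_coeff _ _ (by omega), eps_coeff _ _ (by omega),
    if_pos (by omega), if_neg (by omega), sub_zero, neg_eq_zero] at h1
  exact pow_ne_zero _ (by norm_num) h1

lemma cond_shift_s (i n s : ℕ) (hi : i ≤ 4) : pcond i n (s + 120) ↔ pcond i n s := by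
  unfold pcond
  constructor <;> rintro ⟨h1, h2⟩ <;> refine ⟨by omega, fun k hk => ?_⟩ <;>
    · have hh := h2 k hk
      simp only [Finset.mem_Icc] at hk
      have hk5 : k ≤ 5 := by omega
      interval_cases k <;> omega

lemma cond_shift_n (i n s : ℕ) (hi : i ≤ 4) : pcond i (n + 120) s ↔ pcond i n s := by
  unfold pcond
  constructor <;> rintro ⟨h1, h2⟩ <;> refine ⟨h1, fun k hk => ?_⟩ <;>
    · have hh := h2 k hk
      simp only [Finset.mem_Icc] at hk
      have hk5 : k ≤ 5 := by omega
      interval_cases k <;> omega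

lemma pcond_mod (i n s : ℕ) (hi : i ≤ 4) : pcond i n s ↔ pcond i (n % 120) (s % 120) := by
  have haux : ∀ q n' r, pcond i n' (120 * q + r) ↔ pcond i n' r := by
    intro q
    induction q with
    | zero => simp
    | succ q ih =>
      intro n' r
      have he : 120 * (q + 1) + r = 120 * q + r + 120 := by ring
      rw [he, cond_shift_s _ _ _ hi, ih]
  have haux2 : ∀ q r s', pcond i (120 * q + r) s' ↔ pcond i r s' := by
    intro q
    induction q with
    | zero => simp
    | succ q ih =>
      intro r s'
      have he : 120 * (q + 1) + r = 120 * q + r + 120 := by ring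
      rw [he, cond_shift_n _ _ _ hi, ih]
  conv_lhs => rw [show s = 120 * (s / 120) + s % 120 by omega,
    show n = 120 * (n / 120) + n % 120 by omega]
  rw [haux2, haux]

set_option maxRecDepth 100000 in
set_option maxHeartbeats 4000000 in
lemma card_bound : ∀ n' ∈ Finset.range 120,
    ((Finset.range 120).filter (pcond 1 n')).card ≤ 30 ∧
    ((Finset.range 120).filter (pcond 2 n')).card ≤ 20 ∧
    ((Finset.range 120).filter (pcond 3 n')).card ≤ 10 ∧
    ((Finset.range 120).filter (pcond 4 n')).card ≤ 6 := by decide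

lemma count_le (i n m : ℕ) (hi : i ≤ 4) :
    ((Finset.Icc 1 m).filter (pcond i n)).card ≤
    ((Finset.range 120).filter (pcond i (n % 120))).card * (m / 120 + 1) := by
  have hcard := Finset.card_product ((Finset.range 120).filter (pcond i (n % 120)))
    (Finset.range (m / 120 + 1))
  rw [Finset.card_range] at hcard
  rw [← hcard]
  apply Finset.card_le_card_of_injOn (fun s => (s % 120, s / 120))
  · intro s hs
    simp only [Finset.mem_coe, Finset.mem_filter, Finset.mem_Icc] at hs
    simp only [Finset.mem_coe, Finset.mem_product, Finset.mem_filter, Finset.mem_range]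
    refine ⟨⟨Nat.mod_lt _ (by norm_num), (pcond_mod i n s hi).mp hs.2⟩, ?_⟩
    have := Nat.div_le_div_right (c := 120) hs.1.2
    omega
  · intro a _ b _ hab
    simp only [Prod.mk.injEq] at hab
    omega

lemma main_bound (i n : ℕ) (hi1 : 1 ≤ i) (hi4 : i ≤ 4) (c : ℕ)
    (hc : ((Finset.range 120).filter (pcond i (n % 120))).card ≤ c) (m : ℕ) :
    hcount n m i ≤ c * (m / 120 + 1) := by
  by_cases hin : i ≤ n
  · calc hcount n m i ≤ ((Finset.Icc 1 m).filter (pcond i n)).card := by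
          apply Finset.card_le_card
          apply Finset.monotone_filter_right
          exact fun s _ hs => lowdeg_imp i n s hi1 hin hs
      _ ≤ _ * (m / 120 + 1) := count_le i n m hi4
      _ ≤ c * (m / 120 + 1) := Nat.mul_le_mul_right _ hc
  · have h0 : hcount n m i = 0 := by
      unfold hcount
      rw [Finset.card_eq_zero, Finset.filter_eq_empty_iff]
      intro s hs
      exact lowdeg_small i n s (by omega) (Finset.mem_Icc.mp hs).1
    rw [h0]
    exact Nat.zero_le _

lemma limsup_le_aux (f : ℕ → ℕ) (c : ℕ) (hb : ∀ m, f m ≤ c * (m / 120 + 1)) :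
    limsup (fun m : ℕ => (f m : ℝ) / m) atTop ≤ (c : ℝ) / 120 := by
  have hg : Tendsto (fun m : ℕ => (c : ℝ) / 120 + c / m) atTop (nhds ((c : ℝ) / 120 + 0)) :=
    tendsto_const_nhds.add (tendsto_const_div_atTop_nhds_zero_nat _)
  rw [add_zero] at hg
  refine le_trans (Filter.limsup_le_limsup ?_ ?_ ?_) (le_of_eq hg.limsup_eq)
  · filter_upwards [eventually_ge_atTop 1] with m hm
    have hm' : (0 : ℝ) < m := by exact_mod_cast hm
    have h2 : (f m : ℝ) ≤ c * ((m / 120 : ℕ) + 1) := by exact_mod_cast hb m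
    have h3 : ((m / 120 : ℕ) : ℝ) ≤ (m : ℝ) / 120 := by
      rw [le_div_iff₀ (by norm_num)]
      exact_mod_cast Nat.div_mul_le_self m 120
    have h1 : (f m : ℝ) ≤ c * m / 120 + c := by
      have hc0 : (0 : ℝ) ≤ c := Nat.cast_nonneg c
      nlinarith
    have h4 : (f m : ℝ) / m ≤ (c * m / 120 + c) / m := by
      gcongr
    calc (f m : ℝ) / m ≤ (c * m / 120 + c) / m := h4
      _ = c / 120 + c / m := by field_simp
  · refine (Filter.isBoundedUnder_of ⟨0, fun m => ?_⟩).isCoboundedUnder_le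
    positivity
  · exact hg.isBoundedUnder_le

theorem hcount_limsup_upper_bounds (n : ℕ) (hn : 1 ≤ n) :
    limsup (fun m : ℕ => (hcount n m 1 : ℝ) / m) atTop ≤ (1 / 4 : ℝ) ∧
    limsup (fun m : ℕ => (hcount n m 2 : ℝ) / m) atTop ≤ (1 / 6 : ℝ) ∧
    limsup (fun m : ℕ => (hcount n m 3 : ℝ) / m) atTop ≤ (1 / 12 : ℝ) ∧
    limsup (fun m : ℕ => (hcount n m 4 : ℝ) / m) atTop ≤ (1 / 20 : ℝ) := by
  have key : ∀ i c : ℕ, 1 ≤ i → i ≤ 4 →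
      ((Finset.range 120).filter (pcond i (n % 120))).card ≤ c →
      limsup (fun m : ℕ => (hcount n m i : ℝ) / m) atTop ≤ (c : ℝ) / 120 :=
    fun i c h1 h4 hc => limsup_le_aux _ c (main_bound i n h1 h4 c hc)
  have hmem : n % 120 ∈ Finset.range 120 := Finset.mem_range.mpr (Nat.mod_lt _ (by norm_num))
  obtain ⟨b1, b2, b3, b4⟩ := card_bound (n % 120) hmem
  refine ⟨le_trans (key 1 30 (by norm_num) (by norm_num) b1) (by norm_num),
          le_trans (key 2 20 (by norm_num) (by norm_num) b2) (by norm_num),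
          le_trans (key 3 10 (by norm_num) (by norm_num) b3) (by norm_num),
          le_trans (key 4 6 (by norm_num) (by norm_num) b4) (by norm_num)⟩
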